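/- Let G and G' be formula graphs. If G can be embedded into G' and G' can be embedded into G, then G and G' are isomorphic. -/

import Mathlib

/-!
Injective maps between finite sets in both directions are bijections, by counting. Hence the
vertex map of an embedding `G → G'` is a bijection onto the vertices of `G'`, and, edge sets being
finite, it maps the edges of `G` onto those of `G'`. The substitutions of the embedding need not be
surjective, but only their values on the finitely many terms of `G` and the constants matter, and
an injection on a finite set agrees there with a permutation. With these permutations as
substitutions, the embedding becomes an isomorphism.
-/

/-- A finite signature: finitely many sorts, first-order predicate symbols with
sorted finite arities, second-order relation symbols with finite arities, finitely
many constants per sort, countably infinitely many variables per sort, and no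
function symbols. -/
structure Signature where
  Srt : Type
  Pred : Type
  Rel : Type
  sortFinite : Finite Srt
  predFinite : Finite Pred
  relFinite : Finite Rel
  parity : Pred → ℕ
  psort : (p : Pred) → Fin (parity p) → Srt
  rarity : Rel → ℕ
  Const : Srt → Type
  constFinite : ∀ σ, Finite (Const σ)
  Var : Srt → Type
  varCountable : ∀ σ, Countable (Var σ)
  varInfinite : ∀ σ, Infinite (Var σ)

namespace Signature

/-- First-order terms of sort `σ`: constants and variables. -/
def Term (S : Signature) (σ : S.Srt) : Type := S.Const σ ⊕ S.Var σ

/-- A first-order literal: a predicate symbol, a polarity, and sorted arguments. -/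
structure Literal (S : Signature) where
  pred : S.Pred
  pol : Bool
  args : (i : Fin (S.parity pred)) → S.Term (S.psort pred i)

/-- A formula graph: a finite set `V` of literals together with, for each
second-order relation symbol `R`, a set of tuples from `V` of length the arity
of `R`. -/
structure FormulaGraph (S : Signature) where
  V : Set (Literal S)
  Vfin : V.Finite
  E : (R : S.Rel) → Set (Fin (S.rarity R) → Literal S)
  E_mem : ∀ R t, t ∈ E R → ∀ i, t i ∈ V

/-- The order of a formula graph: the number of its vertices. -/
noncomputable def FormulaGraph.order {S : Signature} (G : FormulaGraph S) : ℕ := G.V.ncard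

/-- Applying a sort-indexed substitution to a literal. -/
def Literal.map {S : Signature} (α : ∀ σ, S.Term σ → S.Term σ) (l : Literal S) :
    Literal S :=
  ⟨l.pred, l.pol, fun i => α _ (l.args i)⟩

/-- A homomorphism of formula graphs: a vertex map together with sort-indexed
substitutions fixing constants, compatible with the literal structure, and
preserving edges. -/
structure Hom {S : Signature} (G G' : FormulaGraph S) where
  h : Literal S → Literal S
  α : ∀ σ, S.Term σ → S.Term σ
  fixesConst : ∀ σ (c : S.Const σ), α σ (Sum.inl c) = Sum.inl c
  mapsV : ∀ l ∈ G.V, h l ∈ G'.V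
  compat : ∀ l ∈ G.V, h l = Literal.map α l
  mapsE : ∀ R t, t ∈ G.E R → (fun i => h (t i)) ∈ G'.E R

/-- The identity homomorphism. -/
def Hom.id {S : Signature} (G : FormulaGraph S) : Hom G G where
  h := fun l => l
  α := fun _ t => t
  fixesConst := fun _ _ => rfl
  mapsV := fun _ hl => hl
  compat := fun _ _ => rfl
  mapsE := fun _ _ ht => ht

/-- Composition of homomorphisms, componentwise. -/
def Hom.comp {S : Signature} {G G' G'' : FormulaGraph S}
    (f : Hom G G') (g : Hom G' G'') : Hom G G'' where
  h := fun l => g.h (f.h l)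
  α := fun σ t => g.α σ (f.α σ t)
  fixesConst := by
    intro σ c
    exact (congrArg (g.α σ) (f.fixesConst σ c)).trans (g.fixesConst σ c)
  mapsV := fun l hl => g.mapsV _ (f.mapsV l hl)
  compat := by
    intro l hl
    exact (g.compat _ (f.mapsV l hl)).trans (by rw [f.compat l hl]; rfl)
  mapsE := fun R t ht => g.mapsE R _ (f.mapsE R t ht)

/-- An embedding: a homomorphism injective on vertices with injective
substitutions. -/
def IsEmbedding {S : Signature} {G G' : FormulaGraph S} (f : Hom G G') : Prop :=
  Set.InjOn f.h G.V ∧ ∀ σ, Function.Injective (f.α σ)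

/-- An isomorphism: a homomorphism with bijective components whose componentwise
inverses also form a homomorphism. -/
def IsIso {S : Signature} {G G' : FormulaGraph S} (f : Hom G G') : Prop :=
  Set.BijOn f.h G.V G'.V ∧ (∀ σ, Function.Bijective (f.α σ)) ∧
  ∃ g : Hom G' G,
    (∀ l ∈ G.V, g.h (f.h l) = l) ∧ (∀ l ∈ G'.V, f.h (g.h l) = l) ∧
    (∀ σ t, g.α σ (f.α σ t) = t) ∧ (∀ σ t, f.α σ (g.α σ t) = t)

/-- Two formula graphs are isomorphic if there is an isomorphism between them. -/
def Iso {S : Signature} (G G' : FormulaGraph S) : Prop := ∃ f : Hom G G', IsIso f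

/-- `G` can be embedded into `G'`. -/
def CanEmbed {S : Signature} (G G' : FormulaGraph S) : Prop :=
  ∃ f : Hom G G', IsEmbedding f

end Signature

open Function Set

theorem Set.bijOn_of_injOn_of_injOn {α β : Type*} {s : Set α} {t : Set β} {f : α → β}
    {g : β → α} (ht : t.Finite) (hf : MapsTo f s t) (hf' : InjOn f s) (hg : MapsTo g t s)
    (hg' : InjOn g t) : BijOn f s t := by
  have hs : s.Finite := ht.of_injOn hf hf'
  refine ⟨hf, hf', fun y hy => ?_⟩
  have hcard : t.ncard ≤ (f '' s).ncard := by
    rw [hf'.ncard_image]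
    exact ncard_le_ncard_of_injOn g hg hg' hs
  rwa [eq_of_subset_of_ncard_le hf.image_subset hcard ht]

theorem Set.BijOn.exists_invOn {α : Type*} {f : α → α} {s t : Set α} (h : BijOn f s t) :
    ∃ g : α → α, InvOn g f s t ∧ MapsTo g t s := by
  cases isEmpty_or_nonempty α
  · exact ⟨id, ⟨fun x => isEmptyElim x, fun x => isEmptyElim x⟩, fun x => isEmptyElim x⟩
  · exact ⟨invFunOn f s, h.invOn_invFunOn, h.surjOn.mapsTo_invFunOn⟩

theorem Set.InjOn.exists_perm_eqOn {α : Type*} {φ : α → α} {s : Set α} (hφ : InjOn φ s)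
    (hs : s.Finite) : ∃ e : Equiv.Perm α, EqOn e φ s := by
  have : Finite s := hs
  let φs : s ↪ α := ⟨s.domRestrict φ, hφ.injective⟩
  obtain ⟨e, he⟩ : ∃ e : α ≃ α, ∀ x : s, e x = φs x := by
    cases finite_or_infinite α
    · exact Cardinal.extend_function_finite φs ⟨Equiv.refl α⟩
    · refine Cardinal.extend_function_of_lt φs ?_ ⟨Equiv.refl α⟩
      exact (Cardinal.lt_aleph0_of_finite s).trans_le (Cardinal.aleph0_le_mk α)
  exact ⟨e, fun x hx => he ⟨x, hx⟩⟩

namespace Signature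

variable {S : Signature}

theorem Literal.map_congr {α β : ∀ σ, S.Term σ → S.Term σ} (l : Literal S)
    (h : ∀ i, α _ (l.args i) = β _ (l.args i)) : l.map α = l.map β :=
  congrArg (Literal.mk l.pred l.pol) (funext h)

theorem Literal.map_map_of_leftInverse {α β : ∀ σ, S.Term σ → S.Term σ}
    (h : ∀ σ, LeftInverse (β σ) (α σ)) (l : Literal S) : (l.map α).map β = l :=
  congrArg (Literal.mk l.pred l.pol) (funext fun i => h _ (l.args i))

namespace FormulaGraph

def terms (G : FormulaGraph S) (σ : S.Srt) : Set (S.Term σ) :=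
  ⋃ l ∈ G.V, ⋃ i, range fun h : S.psort l.pred i = σ => h ▸ l.args i

theorem terms_finite (G : FormulaGraph S) (σ : S.Srt) : (G.terms σ).Finite :=
  G.Vfin.biUnion fun _ _ => finite_iUnion fun _ => finite_range _

theorem args_mem_terms (G : FormulaGraph S) {l : Literal S} (hl : l ∈ G.V)
    (i : Fin (S.parity l.pred)) : l.args i ∈ G.terms (S.psort l.pred i) :=
  mem_biUnion hl (mem_iUnion_of_mem i ⟨rfl, rfl⟩)

theorem E_finite (G : FormulaGraph S) (R : S.Rel) : (G.E R).Finite :=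
  (Finite.pi fun _ => G.Vfin).subset fun t ht i _ => G.E_mem R t ht i

end FormulaGraph

variable {G G' : FormulaGraph S}

theorem Hom.injOn_edges (f : Hom G G') (hf : InjOn f.h G.V) (R : S.Rel) :
    InjOn (fun t i => f.h (t i)) (G.E R) := fun _ hs _ ht hst =>
  funext fun i => hf (G.E_mem R _ hs i) (G.E_mem R _ ht i) (congrFun hst i)

theorem Hom.exists_bijective_subst (f : Hom G G') (hα : ∀ σ, Injective (f.α σ)) :
    ∃ f' : Hom G G', f'.h = f.h ∧ ∀ σ, Bijective (f'.α σ) := by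
  have hfin : ∀ σ, (G.terms σ ∪ range (Sum.inl : S.Const σ → S.Term σ)).Finite := fun σ =>
    have := S.constFinite σ
    (G.terms_finite σ).union (finite_range _)
  choose e he using fun σ => ((hα σ).injOn).exists_perm_eqOn (hfin σ)
  refine ⟨⟨f.h, fun σ => e σ, fun σ c => ?_, f.mapsV, fun l hl => ?_, f.mapsE⟩, rfl,
    fun σ => (e σ).bijective⟩
  · exact (he σ (Or.inr ⟨c, rfl⟩)).trans (f.fixesConst σ c)
  · exact (f.compat l hl).trans
      (l.map_congr fun i => (he _ (Or.inl (G.args_mem_terms hl i))).symm)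

theorem Hom.isIso_of_bijOn (f : Hom G G') (hV : BijOn f.h G.V G'.V)
    (hE : ∀ R, SurjOn (fun t i => f.h (t i)) (G.E R) (G'.E R)) (hα : ∀ σ, Bijective (f.α σ)) :
    IsIso f := by
  obtain ⟨g, hinv, hg⟩ := hV.exists_invOn
  have hα' : ∀ σ, LeftInverse (surjInv (hα σ).2) (f.α σ) := fun σ => leftInverse_surjInv (hα σ)
  refine ⟨hV, hα, ⟨g, fun σ => surjInv (hα σ).2, fun σ c => ?_, hg, fun l hl => ?_,
    fun R t ht => ?_⟩, hinv.1, hinv.2, hα', fun σ => rightInverse_surjInv (hα σ).2⟩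
  · simpa only [f.fixesConst] using hα' σ (Sum.inl c)
  · obtain ⟨m, hm, rfl⟩ := hV.surjOn hl
    rw [hinv.1 hm, f.compat m hm, Literal.map_map_of_leftInverse hα']
  · obtain ⟨s, hs, rfl⟩ := hE R ht
    simpa only [hinv.1 (G.E_mem R s hs _)] using hs

end Signature

open Signature in
/-- mutually embeddable formula graphs are isomorphic. -/
theorem stmt8 (S : Signature) (G G' : FormulaGraph S)
    (h1 : CanEmbed G G') (h2 : CanEmbed G' G) : Iso G G' := by
  obtain ⟨f, hfV, hfα⟩ := h1
  obtain ⟨g, hgV, -⟩ := h2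
  have hV : BijOn f.h G.V G'.V := bijOn_of_injOn_of_injOn G'.Vfin f.mapsV hfV g.mapsV hgV
  have hE : ∀ R, SurjOn (fun t i => f.h (t i)) (G.E R) (G'.E R) := fun R =>
    (bijOn_of_injOn_of_injOn (G'.E_finite R) (f.mapsE R) (f.injOn_edges hfV R) (g.mapsE R)
      (g.injOn_edges hgV R)).surjOn
  obtain ⟨f', hh, hα⟩ := f.exists_bijective_subst hfα
  rw [← hh] at hV hE
  exact ⟨f', f'.isIso_of_bijOn hV hE hα⟩
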